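/- Let φ: ℝ → [0,∞) be C¹ with φ = 0 on [E₀,∞), and let h(s) = 4π√2 ∫_s^{E₀} √(E-s) φ(E) dE (for s < E₀; h(s) = 0 otherwise). Then h' satisfies the formula h''(s) = -4π√2 ∫_s^{E₀} φ'(E)/(2√(E-s)) dE for s < E₀; in particular h' is locally Lipschitz on ℝ. -/

import Mathlib

open MeasureTheory Real Set Metric

section Aux

lemma aux_sqrtle_sq {a t : ℝ} (h : Real.sqrt a ≤ t) : a ≤ t ^ 2 := by
  rcases le_or_gt a 0 with h0 | h0
  · nlinarith [sq_nonneg t]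
  · nlinarith [Real.sq_sqrt h0.le, Real.sqrt_nonneg a]

lemma aux_int_cpt {f : ℝ → ℝ} (hf : Continuous f) {T : ℝ}
    (h0 : ∀ t : ℝ, T ≤ |t| → f t = 0) : Integrable f := by
  apply hf.integrable_of_hasCompactSupport
  apply HasCompactSupport.intro (isCompact_Icc (a := -T) (b := T))
  intro t ht
  rw [Set.mem_Icc] at ht
  push_neg at ht
  apply h0
  rcases le_or_gt (-T) t with h | h
  · exact le_trans (ht h).le (le_abs_self t)
  · linarith [neg_le_abs t]

lemma aux_ext {f : ℝ → ℝ} {R : ℝ} (h0 : ∀ t : ℝ, R ≤ t → f t = 0) :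
    ∫ t in Set.Ioi (0:ℝ), f t = ∫ t in Set.Ioo (0:ℝ) R, f t := by
  apply setIntegral_eq_of_subset_of_forall_diff_eq_zero measurableSet_Ioi
    Set.Ioo_subset_Ioi_self
  rintro t ⟨ht1, ht2⟩
  apply h0
  by_contra hlt
  push_neg at hlt
  exact ht2 ⟨ht1, hlt⟩

lemma aux_Ioo_interval {f : ℝ → ℝ} {R : ℝ} (hR : 0 ≤ R) :
    ∫ t in Set.Ioo (0:ℝ) R, f t = ∫ t in (0:ℝ)..R, f t := by
  rw [intervalIntegral.integral_of_le hR, MeasureTheory.integral_Ioc_eq_integral_Ioo]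

lemma aux_derivVanish {φ : ℝ → ℝ} {E₀ : ℝ} (hφC1 : ContDiff ℝ 1 φ)
    (hφvan : ∀ E, E₀ ≤ E → φ E = 0) : ∀ E, E₀ ≤ E → deriv φ E = 0 := by
  have hgt : ∀ E, E₀ < E → deriv φ E = 0 := by
    intro E hE
    have hev : φ =ᶠ[nhds E] (fun _ => (0:ℝ)) := by
      filter_upwards [Ioi_mem_nhds hE] with x hx
      exact hφvan x hx.le
    rw [hev.deriv_eq]
    simp
  intro E hE
  have hc : ContinuousAt (deriv φ) E := (hφC1.continuous_deriv le_rfl).continuousAt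
  have h1 : Filter.Tendsto (deriv φ) (nhdsWithin E (Set.Ioi E)) (nhds (deriv φ E)) :=
    hc.continuousWithinAt
  have h2 : Filter.Tendsto (deriv φ) (nhdsWithin E (Set.Ioi E)) (nhds 0) := by
    apply Filter.Tendsto.congr' _ tendsto_const_nhds
    filter_upwards [self_mem_nhdsWithin] with x hx
    exact (hgt x (lt_of_le_of_lt hE hx)).symm
  exact tendsto_nhds_unique h1 h2

lemma aux_cov {E₀ s : ℝ} (hs : s < E₀) (g : ℝ → ℝ) :
    ∫ E in Set.Ioo s E₀, g E
      = ∫ t in Set.Ioo (0:ℝ) (Real.sqrt (E₀ - s)), 2 * t * g (s + t ^ 2) := by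
  set T := Real.sqrt (E₀ - s) with hT
  have hT2 : T ^ 2 = E₀ - s := Real.sq_sqrt (by linarith)
  have himg : (fun t : ℝ => s + t ^ 2) '' Set.Ioo 0 T = Set.Ioo s E₀ := by
    ext E
    constructor
    · rintro ⟨t, ⟨ht0, htT⟩, rfl⟩
      constructor
      · show s < s + t ^ 2
        nlinarith
      · show s + t ^ 2 < E₀
        nlinarith
    · rintro ⟨hE1, hE2⟩
      refine ⟨Real.sqrt (E - s), ⟨Real.sqrt_pos.2 (by linarith), ?_⟩, ?_⟩
      · exact Real.sqrt_lt_sqrt (by linarith) (by linarith)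
      · show s + Real.sqrt (E - s) ^ 2 = E
        rw [Real.sq_sqrt (by linarith : (0:ℝ) ≤ E - s)]
        ring
  have hderiv : ∀ t ∈ Set.Ioo (0:ℝ) T,
      HasDerivWithinAt (fun t : ℝ => s + t ^ 2) (2 * t) (Set.Ioo 0 T) t := by
    intro t _
    simpa using ((hasDerivAt_pow 2 t).const_add s).hasDerivWithinAt
  have hinj : Set.InjOn (fun t : ℝ => s + t ^ 2) (Set.Ioo 0 T) := by
    intro a ha b hb hab
    simp only at hab
    have h2 : a ^ 2 = b ^ 2 := by linarith
    rcases (Commute.all a b).sq_eq_sq_iff_eq_or_eq_neg.mp h2 with h | h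
    · exact h
    · exfalso; have := ha.1; have := hb.1; linarith
  rw [← himg, integral_image_eq_integral_abs_deriv_smul measurableSet_Ioo hderiv hinj g]
  apply setIntegral_congr_fun measurableSet_Ioo
  intro t ht
  have h2t : (0:ℝ) < 2 * t := by linarith [ht.1]
  simp only [smul_eq_mul]
  rw [abs_of_pos h2t]

lemma aux_indint (R M : ℝ) :
    Integrable (Set.indicator (Set.Icc (0:ℝ) R) (fun _ => M))
      (MeasureTheory.volume.restrict (Set.Ioi 0)) := by
  rw [integrable_indicator_iff measurableSet_Icc]
  refine integrableOn_const (ne_of_lt ?_)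
  exact lt_of_le_of_lt (Measure.restrict_apply_le _ _) measure_Icc_lt_top

lemma aux_hasDeriv {φ : ℝ → ℝ} {E₀ : ℝ} (hφC1 : ContDiff ℝ 1 φ)
    (hφvan : ∀ E, E₀ ≤ E → φ E = 0) (w : ℝ → ℝ) (hw : Continuous w) (s : ℝ) :
    HasDerivAt (fun x => ∫ t in Set.Ioi (0:ℝ), w t * φ (x + t ^ 2))
      (∫ t in Set.Ioi (0:ℝ), w t * deriv φ (s + t ^ 2)) s := by
  have hφc : Continuous φ := hφC1.continuous
  have hφ'c : Continuous (deriv φ) := hφC1.continuous_deriv le_rfl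
  have hφd : Differentiable ℝ φ := hφC1.differentiable one_ne_zero
  have hd0 := aux_derivVanish hφC1 hφvan
  set R : ℝ := Real.sqrt (|E₀ - s| + 1) with hRdef
  have hR2 : R ^ 2 = |E₀ - s| + 1 := Real.sq_sqrt (by positivity)
  have hR0 : 0 ≤ R := Real.sqrt_nonneg _
  have hkey : ∀ x ∈ ball s 1, ∀ t : ℝ, R ≤ |t| → E₀ ≤ x + t ^ 2 := by
    intro x hx t ht
    rw [hRdef] at ht
    have h1 : |E₀ - s| + 1 ≤ |t| ^ 2 := aux_sqrtle_sq ht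
    rw [sq_abs] at h1
    have hx' : |x - s| < 1 := by rwa [mem_ball, Real.dist_eq] at hx
    have h2 := abs_lt.1 hx'
    have h3 := le_abs_self (E₀ - s)
    linarith
  obtain ⟨K1, hK1⟩ := (isCompact_Icc (a := s - 1) (b := s + 1 + R ^ 2)).exists_bound_of_continuousOn
    hφ'c.continuousOn
  obtain ⟨K2, hK2⟩ := (isCompact_Icc (a := -R) (b := R)).exists_bound_of_continuousOn
    hw.continuousOn
  set M : ℝ := max K2 0 * max K1 0 with hMdef
  have hMnn : 0 ≤ M := mul_nonneg (le_max_right _ _) (le_max_right _ _)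
  set bound : ℝ → ℝ := Set.indicator (Set.Icc 0 R) (fun _ => M) with hbdef
  have hbnn : ∀ t, 0 ≤ bound t := fun t => Set.indicator_nonneg (fun _ _ => hMnn) t
  have hcont : ∀ x : ℝ, Continuous (fun t : ℝ => w t * φ (x + t ^ 2)) :=
    fun x => hw.mul (hφc.comp (continuous_const.add (continuous_pow 2)))
  have hcont' : ∀ x : ℝ, Continuous (fun t : ℝ => w t * deriv φ (x + t ^ 2)) :=
    fun x => hw.mul (hφ'c.comp (continuous_const.add (continuous_pow 2)))
  have key := hasDerivAt_integral_of_dominated_loc_of_deriv_le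
    (μ := MeasureTheory.volume.restrict (Set.Ioi 0))
    (F := fun x t => w t * φ (x + t ^ 2)) (F' := fun x t => w t * deriv φ (x + t ^ 2))
    (x₀ := s) (bound := bound) (ball_mem_nhds s one_pos)
    (Filter.Eventually.of_forall fun x => (hcont x).aestronglyMeasurable)
    ?_ ((hcont' s).aestronglyMeasurable) ?_ (aux_indint R M) ?_
  · exact key.2
  · -- integrability of F s
    apply (aux_int_cpt (hcont s) (T := R) ?_).integrableOn
    intro t ht
    rw [hφvan _ (hkey s (mem_ball_self one_pos) t ht), mul_zero]
  · -- bound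
    apply (ae_restrict_iff' measurableSet_Ioi).2
    apply Filter.Eventually.of_forall
    intro t ht x hx
    show ‖w t * deriv φ (x + t ^ 2)‖ ≤ bound t
    rcases le_or_gt R t with hc | hc
    · rw [hd0 _ (hkey x hx t (le_trans hc (le_abs_self t))), mul_zero, norm_zero]
      exact hbnn t
    · have htmem : t ∈ Set.Icc (0:ℝ) R := ⟨le_of_lt ht, hc.le⟩
      rw [hbdef, Set.indicator_of_mem htmem]
      rw [norm_mul]
      have hb1 : ‖w t‖ ≤ max K2 0 :=
        le_trans (hK2 t ⟨by linarith [(show (0:ℝ) < t from ht).le], hc.le⟩) (le_max_left _ _)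
      have hxmem : x + t ^ 2 ∈ Set.Icc (s - 1) (s + 1 + R ^ 2) := by
        have hx' := abs_lt.1 (by rwa [mem_ball, Real.dist_eq] at hx)
        have ht2 : t ^ 2 ≤ R ^ 2 := by nlinarith [(show (0:ℝ) < t from ht).le]
        constructor
        · nlinarith [sq_nonneg t]
        · linarith
      have hb2 : ‖deriv φ (x + t ^ 2)‖ ≤ max K1 0 :=
        le_trans (hK1 _ hxmem) (le_max_left _ _)
      exact mul_le_mul hb1 hb2 (norm_nonneg _) (le_max_right _ _)
  · -- differentiability
    apply Filter.Eventually.of_forall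
    intro t x hx
    have h1 : HasDerivAt (fun x : ℝ => φ (x + t ^ 2)) (deriv φ (x + t ^ 2)) x := by
      have := (hφd (x + t ^ 2)).hasDerivAt.comp x ((hasDerivAt_id x).add_const (t ^ 2))
      simpa [Function.comp_def] using this
    exact h1.const_mul (w t)

lemma aux_ibp {φ : ℝ → ℝ} {E₀ : ℝ} (hφC1 : ContDiff ℝ 1 φ)
    (hφvan : ∀ E, E₀ ≤ E → φ E = 0) (s : ℝ) :
    ∫ t in Set.Ioi (0:ℝ), 2 * t ^ 2 * deriv φ (s + t ^ 2)
      = - ∫ t in Set.Ioi (0:ℝ), φ (s + t ^ 2) := by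
  have hφc : Continuous φ := hφC1.continuous
  have hφ'c : Continuous (deriv φ) := hφC1.continuous_deriv le_rfl
  have hφd : Differentiable ℝ φ := hφC1.differentiable one_ne_zero
  have hd0 := aux_derivVanish hφC1 hφvan
  set R : ℝ := Real.sqrt (|E₀ - s| + 1) with hRdef
  have hR2 : R ^ 2 = |E₀ - s| + 1 := Real.sq_sqrt (by positivity)
  have hR0 : 0 ≤ R := Real.sqrt_nonneg _
  have hkey : ∀ t : ℝ, R ≤ |t| → E₀ ≤ s + t ^ 2 := by
    intro t ht
    rw [hRdef] at ht
    have h1 : |E₀ - s| + 1 ≤ |t| ^ 2 := aux_sqrtle_sq ht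
    rw [sq_abs] at h1
    have h3 := le_abs_self (E₀ - s)
    linarith
  have hkR : E₀ ≤ s + R ^ 2 := hkey R (by rw [abs_of_nonneg hR0])
  rw [aux_ext (R := R) (fun t ht => by
        rw [hd0 _ (hkey t (le_trans ht (le_abs_self t))), mul_zero]),
      aux_ext (R := R) (fun t ht => hφvan _ (hkey t (le_trans ht (le_abs_self t)))),
      aux_Ioo_interval hR0, aux_Ioo_interval hR0]
  have hinner : ∀ x : ℝ, HasDerivAt (fun t : ℝ => s + t ^ 2) (2 * x) x :=
    fun x => by simpa using ((hasDerivAt_pow 2 x).const_add s)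
  have hv : ∀ x ∈ Set.uIcc (0:ℝ) R,
      HasDerivAt (fun t : ℝ => φ (s + t ^ 2)) (deriv φ (s + x ^ 2) * (2 * x)) x := by
    intro x _
    have := (hφd (s + x ^ 2)).hasDerivAt.comp x (hinner x)
    exact this
  have hu : ∀ x ∈ Set.uIcc (0:ℝ) R, HasDerivAt (fun t : ℝ => t) 1 x :=
    fun x _ => hasDerivAt_id x
  have hv' : IntervalIntegrable (fun x : ℝ => deriv φ (s + x ^ 2) * (2 * x))
      MeasureTheory.volume 0 R :=
    ((hφ'c.comp (continuous_const.add (continuous_pow 2))).mul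
      (continuous_const.mul continuous_id)).intervalIntegrable 0 R
  have hibp := intervalIntegral.integral_mul_deriv_eq_deriv_mul hu hv
    (intervalIntegrable_const) hv'
  have hL : (∫ t in (0:ℝ)..R, 2 * t ^ 2 * deriv φ (s + t ^ 2))
      = ∫ t in (0:ℝ)..R, t * (deriv φ (s + t ^ 2) * (2 * t)) := by
    apply intervalIntegral.integral_congr
    intro t _
    ring
  rw [hL, hibp, hφvan _ hkR]
  simp

lemma aux_singular {φ : ℝ → ℝ} {E₀ : ℝ} (hφC1 : ContDiff ℝ 1 φ)
    (hφvan : ∀ E, E₀ ≤ E → φ E = 0) {s : ℝ} (hs : s < E₀) :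
    ∫ E in s..E₀, deriv φ E / (2 * Real.sqrt (E - s))
      = ∫ t in Set.Ioi (0:ℝ), deriv φ (s + t ^ 2) := by
  have hd0 := aux_derivVanish hφC1 hφvan
  set T := Real.sqrt (E₀ - s) with hT
  rw [intervalIntegral.integral_of_le hs.le, MeasureTheory.integral_Ioc_eq_integral_Ioo,
      aux_cov hs (fun E => deriv φ E / (2 * Real.sqrt (E - s))),
      aux_ext (R := T) (fun t ht => hd0 _ (by nlinarith [aux_sqrtle_sq ht]))]
  apply setIntegral_congr_fun measurableSet_Ioo
  intro t ht
  have ht0 : (0:ℝ) < t := ht.1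
  simp only [add_sub_cancel_left]
  rw [Real.sqrt_sq ht0.le]
  field_simp

end Aux

/-- `h''(s) = -4π√2 ∫_s^{E₀} φ'(E)/(2√(E-s)) dE` for `s < E₀`; in
particular `h'` is locally Lipschitz on `ℝ`. -/
theorem stmt3 (φ : ℝ → ℝ) (E₀ : ℝ)
    (hφC1 : ContDiff ℝ 1 φ) (hφnn : ∀ E, 0 ≤ φ E)
    (hφvan : ∀ E, E₀ ≤ E → φ E = 0)
    (h : ℝ → ℝ)
    (hh : ∀ s : ℝ, h s =
      if s < E₀ then 4 * π * Real.sqrt 2 * ∫ E in s..E₀, Real.sqrt (E - s) * φ E else 0) :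
    (∀ s : ℝ, s < E₀ →
      deriv (deriv h) s = -(4 * π * Real.sqrt 2) * ∫ E in s..E₀, deriv φ E / (2 * Real.sqrt (E - s))) ∧
    LocallyLipschitz (deriv h) := by
  have hφ'c : Continuous (deriv φ) := hφC1.continuous_deriv le_rfl
  have hd0 := aux_derivVanish hφC1 hφvan
  set C : ℝ := 4 * π * Real.sqrt 2 with hCdef
  set G₀ : ℝ → ℝ := fun x => ∫ t in Set.Ioi (0:ℝ), 2 * t ^ 2 * φ (x + t ^ 2) with hG₀
  set G₁ : ℝ → ℝ := fun x => ∫ t in Set.Ioi (0:ℝ), φ (x + t ^ 2) with hG₁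
  set G₂ : ℝ → ℝ := fun x => ∫ t in Set.Ioi (0:ℝ), deriv φ (x + t ^ 2) with hG₂
  have hA : h = fun s => C * G₀ s := by
    funext s
    rw [hh s]
    by_cases hcase : s < E₀
    · rw [if_pos hcase]
      congr 1
      rw [intervalIntegral.integral_of_le hcase.le, MeasureTheory.integral_Ioc_eq_integral_Ioo,
          aux_cov hcase (fun E => Real.sqrt (E - s) * φ E)]
      have hext : (∫ t in Set.Ioi (0:ℝ), 2 * t ^ 2 * φ (s + t ^ 2))
          = ∫ t in Set.Ioo (0:ℝ) (Real.sqrt (E₀ - s)), 2 * t ^ 2 * φ (s + t ^ 2) :=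
        aux_ext (fun t ht => by
          rw [hφvan _ (by nlinarith [aux_sqrtle_sq ht]), mul_zero])
      rw [hG₀]
      simp only
      rw [hext]
      apply setIntegral_congr_fun measurableSet_Ioo
      intro t ht
      simp only [add_sub_cancel_left]
      rw [Real.sqrt_sq ht.1.le]
      ring
    · rw [if_neg hcase]
      push_neg at hcase
      have hz : G₀ s = 0 := by
        rw [hG₀]
        simp only
        rw [show (fun t : ℝ => 2 * t ^ 2 * φ (s + t ^ 2)) = fun _ => (0:ℝ) from
          funext fun t => by rw [hφvan _ (by nlinarith [sq_nonneg t]), mul_zero]]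
        exact integral_zero _ _
      rw [hz, mul_zero]
  have hDG₀ : ∀ s : ℝ, HasDerivAt G₀ (-(G₁ s)) s := by
    intro s
    have h1 := aux_hasDeriv hφC1 hφvan (fun t => 2 * t ^ 2)
      (continuous_const.mul (continuous_pow 2)) s
    rw [aux_ibp hφC1 hφvan s] at h1
    exact h1
  have hDG₁ : ∀ s : ℝ, HasDerivAt G₁ (G₂ s) s := by
    intro s
    have h1 := aux_hasDeriv hφC1 hφvan (fun _ => (1:ℝ)) continuous_const s
    simp only [one_mul] at h1
    exact h1
  have hDh : ∀ s : ℝ, HasDerivAt h (-(C * G₁ s)) s := by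
    intro s
    rw [hA]
    simpa [mul_neg] using (hDG₀ s).const_mul C
  have hderivh : deriv h = fun s => -(C * G₁ s) := funext fun s => (hDh s).deriv
  have hD2 : ∀ s : ℝ, HasDerivAt (deriv h) (-(C * G₂ s)) s := by
    intro s
    rw [hderivh]
    exact ((hDG₁ s).const_mul C).neg
  constructor
  · intro s hs
    rw [(hD2 s).deriv, aux_singular hφC1 hφvan hs]
    ring
  · intro x
    set R : ℝ := Real.sqrt (|E₀ - x| + 2) with hRdef
    have hR2 : R ^ 2 = |E₀ - x| + 2 := Real.sq_sqrt (by positivity)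
    have hR0 : 0 ≤ R := Real.sqrt_nonneg _
    obtain ⟨K1, hK1⟩ := (isCompact_Icc (a := x - 1) (b := x + 1 + R ^ 2)).exists_bound_of_continuousOn
      hφ'c.continuousOn
    set M₂ : ℝ := max K1 0 with hM₂
    set bound : ℝ → ℝ := Set.indicator (Set.Icc 0 R) (fun _ => M₂) with hbdef
    have hbnn : ∀ t, 0 ≤ bound t :=
      fun t => Set.indicator_nonneg (fun _ _ => le_max_right _ _) t
    have hbnd : ∀ y ∈ ball x 1, ‖G₂ y‖ ≤ ∫ t in Set.Ioi (0:ℝ), bound t := by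
      intro y hy
      have hy' := abs_lt.1 (by rwa [mem_ball, Real.dist_eq] at hy)
      apply norm_integral_le_of_norm_le (aux_indint R M₂)
      apply (ae_restrict_iff' measurableSet_Ioi).2
      apply Filter.Eventually.of_forall
      intro t ht
      rcases le_or_gt R t with hc | hc
      · have h1 : E₀ ≤ y + t ^ 2 := by
          rw [hRdef] at hc
          have h2 := aux_sqrtle_sq hc
          have h3 := le_abs_self (E₀ - x)
          linarith
        rw [hd0 _ h1, norm_zero]
        exact hbnn t
      · have htmem : t ∈ Set.Icc (0:ℝ) R := Set.mem_Icc.mpr ⟨le_of_lt ht, hc.le⟩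
        rw [Set.indicator_of_mem htmem]
        apply le_trans (hK1 _ ?_) (le_max_left _ _)
        have ht2 : t ^ 2 ≤ R ^ 2 := by nlinarith [(show (0:ℝ) < t from ht).le]
        constructor
        · nlinarith [sq_nonneg t]
        · linarith
    set M : ℝ := |C| * ∫ t in Set.Ioi (0:ℝ), bound t with hMdef
    refine ⟨⟨max M 0, le_max_right _ _⟩, ball x 1, ball_mem_nhds x one_pos, ?_⟩
    apply (convex_ball x 1).lipschitzOnWith_of_nnnorm_hasDerivWithin_le
      (f' := fun y => -(C * G₂ y))
      (fun y _ => (hD2 y).hasDerivWithinAt)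
    intro y hy
    change ((‖-(C * G₂ y)‖₊ : NNReal) : ℝ) ≤ max M 0
    rw [coe_nnnorm]
    have h1 : ‖-(C * G₂ y)‖ = |C| * ‖G₂ y‖ := by
      rw [norm_neg, norm_mul, Real.norm_eq_abs]
    rw [h1]
    calc |C| * ‖G₂ y‖ ≤ |C| * ∫ t in Set.Ioi (0:ℝ), bound t :=
          mul_le_mul_of_nonneg_left (hbnd y hy) (abs_nonneg C)
      _ = M := rfl
      _ ≤ max M 0 := le_max_left _ _
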